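/- For every quarter-plane word w̄ over S_1, the raising algorithm is well defined (the factorizations required at each step exist) and its output equals Ψ_1(w̄). -/

import Mathlib

/-- The step set `S_1 = {(0,1), (-1,0), (1,-1)}`, and quarter-plane words over
it: every letter is a step of `S_1` and every prefix sum has both coordinates
nonnegative. -/
def QP1 (w : List (ℤ × ℤ)) : Prop :=
  (∀ a ∈ w, a = ((0 : ℤ), (1 : ℤ)) ∨ a = ((-1 : ℤ), (0 : ℤ)) ∨ a = ((1 : ℤ), (-1 : ℤ))) ∧
    ∀ i, 0 ≤ ((w.take i).sum).1 ∧ 0 ≤ ((w.take i).sum).2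

/-- One backward step of `Ψ_1`: from a letter of `S_1` and the current counter
`(h, v)`, produce the output letter in `{-1, 0, 1}` and the new counter. -/
def B1 (a : ℤ × ℤ) (c : ℕ × ℕ) : ℤ × ℕ × ℕ :=
  if a = ((0 : ℤ), (1 : ℤ)) then
    if c.2 = 0 then (0, c.1, 0) else (1, c.1, c.2 - 1)
  else if a = ((1 : ℤ), (-1 : ℤ)) then
    if c.1 = 0 then (-1, 0, c.2 + 1) else (0, c.1 - 1, c.2 + 1)
  else -- a = (-1, 0)
    (-1, c.1 + 1, c.2)

/-- Right-to-left run of `Ψ_1`: starting from the counter `(0, 0)` at the right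
end, process the letters from right to left; returns the counter at the left
end together with the list of outputs in input (left-to-right) order. -/
def Psi1Run : List (ℤ × ℤ) → (ℕ × ℕ) × List ℤ
  | [] => ((0, 0), [])
  | a :: rest =>
    let r := Psi1Run rest
    let s := B1 a r.1
    ((s.2.1, s.2.2), s.1 :: r.2)

/-- The map `Ψ_1`. -/
def Psi1 (w : List (ℤ × ℤ)) : List ℤ := (Psi1Run w).2

/-- The five-letter alphabet `{U, L•, L, D•, D}` used during the raising
algorithm; `Lr` stands for `L•` and `Dr` for `D•` (the mark `•` indicates
raisability). -/
inductive RLetter : Type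
  | U | Lr | L | Dr | D
deriving DecidableEq

/-- Erasing the marks: `U ↦ 1`, `L•, L ↦ 0`, `D•, D ↦ -1`. -/
def eraseMark : RLetter → ℤ
  | .U => 1
  | .Lr => 0
  | .L => 0
  | .Dr => -1
  | .D => -1

/-- Replace the *last* occurrence of `x` in the list by `y`; `none` if `x` does
not occur.  This implements the factorization `M = w·x·w′` with `w′` free of
`x`, returning `w·y·w′`. -/
def replaceLast (x y : RLetter) : List RLetter → Option (List RLetter)
  | [] => none
  | a :: rest =>
    match replaceLast x y rest with
    | some rest' => some (a :: rest')
    | none => if a = x then some (y :: rest) else none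

/-- One step of the raising algorithm, processing the next quarter-plane
letter: `(0,1)` appends `L•`; `(1,-1)` raises the last `L•` to `U` and appends
`D•`; `(-1,0)` raises the last `D•` to `L` and appends `D`.  `none` indicates
that the required factorization does not exist. -/
def raiseStep (M : List RLetter) (a : ℤ × ℤ) : Option (List RLetter) :=
  if a = ((0 : ℤ), (1 : ℤ)) then some (M ++ [RLetter.Lr])
  else if a = ((1 : ℤ), (-1 : ℤ)) then
    (replaceLast RLetter.Lr RLetter.U M).map (fun M' => M' ++ [RLetter.Dr])
  else if a = ((-1 : ℤ), (0 : ℤ)) then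
    (replaceLast RLetter.Dr RLetter.L M).map (fun M' => M' ++ [RLetter.D])
  else none

/-- The raising algorithm: starting from `M₀ = ε`, process the quarter-plane
word left to right. -/
def raiseRun : List RLetter → List (ℤ × ℤ) → Option (List RLetter)
  | M, [] => some M
  | M, a :: rest =>
    match raiseStep M a with
    | none => none
    | some M' => raiseRun M' rest


/-! ### Auxiliary machinery -/

/-- Replace the first occurrence of `x` by `y`. -/
def replF (x y : RLetter) : List RLetter → List RLetter
  | [] => []
  | a :: rest => if a = x then y :: rest else a :: replF x y rest

/-- Replace the last occurrence of `x` by `y` (total version). -/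
def repl (x y : RLetter) (M : List RLetter) : List RLetter :=
  (replF x y M.reverse).reverse

lemma replF_not_mem {x : RLetter} (y : RLetter) {B : List RLetter} (h : x ∉ B) :
    replF x y B = B := by
  induction B with
  | nil => rfl
  | cons a rest ih =>
    simp only [List.mem_cons, not_or] at h
    simp [replF, Ne.symm h.1, ih h.2]

lemma replF_append_left {x : RLetter} (y : RLetter) {B : List RLetter} (C : List RLetter)
    (h : x ∈ B) : replF x y (B ++ C) = replF x y B ++ C := by
  induction B with
  | nil => simp at h
  | cons a rest ih =>
    by_cases hax : a = x
    · simp [replF, hax]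
    · rcases List.mem_cons.mp h with h | h
      · exact absurd h.symm hax
      · simp [replF, hax, ih h]

lemma replF_append_right {x : RLetter} (y : RLetter) {B : List RLetter} (C : List RLetter)
    (h : x ∉ B) : replF x y (B ++ C) = B ++ replF x y C := by
  induction B with
  | nil => rfl
  | cons a rest ih =>
    simp only [List.mem_cons, not_or] at h
    simp [replF, Ne.symm h.1, ih h.2]

lemma replF_comm {x y x' y' : RLetter} (h1 : x ≠ x') (h2 : x ≠ y') (h3 : x' ≠ y)
    (M : List RLetter) : replF x y (replF x' y' M) = replF x' y' (replF x y M) := by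
  induction M with
  | nil => rfl
  | cons a rest ih =>
    by_cases hax : a = x
    · subst hax
      simp [replF, h1, Ne.symm h3, Ne.symm h2, h2]
    · by_cases hax' : a = x'
      · subst hax'
        simp [replF, Ne.symm h1, h3, h1, Ne.symm h2]
      · simp [replF, hax, hax', ih]

lemma replF_count_other {x y z : RLetter} (hzx : z ≠ x) (hzy : z ≠ y) (M : List RLetter) :
    (replF x y M).count z = M.count z := by
  induction M with
  | nil => rfl
  | cons a rest ih =>
    by_cases hax : a = x
    · subst hax
      simp [replF, List.count_cons, hzx, hzy, Ne.symm hzx, Ne.symm hzy]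
    · simp [replF, hax, List.count_cons, ih]

lemma replF_count_self {x y : RLetter} (hxy : x ≠ y) {M : List RLetter} (h : x ∈ M) :
    (replF x y M).count x + 1 = M.count x := by
  induction M with
  | nil => simp at h
  | cons a rest ih =>
    by_cases hax : a = x
    · subst hax
      simp [List.count_cons, replF, Ne.symm hxy]
    · rcases List.mem_cons.mp h with h | h
      · exact absurd h.symm hax
      · simp [replF, hax, List.count_cons, ih h]

lemma repl_not_mem {x : RLetter} (y : RLetter) {M : List RLetter} (h : x ∉ M) :
    repl x y M = M := by
  unfold repl
  rw [replF_not_mem y (by simpa using h), List.reverse_reverse]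

lemma repl_snoc (x y : RLetter) (M : List RLetter) :
    repl x y (M ++ [x]) = M ++ [y] := by
  unfold repl
  simp [replF]

lemma repl_append {x : RLetter} (y : RLetter) {A : List RLetter} (M : List RLetter)
    (h : x ∉ A) : repl x y (M ++ A) = repl x y M ++ A := by
  unfold repl
  rw [List.reverse_append, replF_append_right y _ (by simpa using h), List.reverse_append,
    List.reverse_reverse]

lemma repl_comm {x y x' y' : RLetter} (h1 : x ≠ x') (h2 : x ≠ y') (h3 : x' ≠ y)
    (M : List RLetter) : repl x y (repl x' y' M) = repl x' y' (repl x y M) := by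
  unfold repl
  rw [List.reverse_reverse, List.reverse_reverse, replF_comm h1 h2 h3]

lemma repl_count_other {x y z : RLetter} (hzx : z ≠ x) (hzy : z ≠ y) (M : List RLetter) :
    (repl x y M).count z = M.count z := by
  unfold repl
  rw [List.count_reverse, replF_count_other hzx hzy, List.count_reverse]

lemma repl_count_self {x y : RLetter} (hxy : x ≠ y) {M : List RLetter} (h : x ∈ M) :
    (repl x y M).count x + 1 = M.count x := by
  unfold repl
  rw [List.count_reverse, replF_count_self hxy (by simpa using h), List.count_reverse]

lemma replaceLast_eq (x y : RLetter) (M : List RLetter) :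
    replaceLast x y M = if x ∈ M then some (repl x y M) else none := by
  induction M with
  | nil => rfl
  | cons a rest ih =>
    rw [replaceLast, ih]
    by_cases h : x ∈ rest
    · rw [if_pos h, if_pos (List.mem_cons_of_mem a h)]
      have : repl x y (a :: rest) = a :: repl x y rest := by
        unfold repl
        rw [List.reverse_cons, replF_append_left y _ (by simpa using h)]
        simp
      rw [this]
    · rw [if_neg h]
      by_cases hax : a = x
      · subst hax
        rw [if_pos rfl, if_pos List.mem_cons_self]
        have : repl a y (a :: rest) = y :: rest := by
          unfold repl
          rw [List.reverse_cons, replF_append_right y _ (by simpa using h)]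
          simp [replF]
        rw [this]
      · rw [if_neg hax, if_neg (by
          intro hm
          rcases List.mem_cons.mp hm with e | e
          exacts [hax e.symm, h e])]

/-- raise the last `L•` -/
abbrev rL (M : List RLetter) : List RLetter := repl RLetter.Lr RLetter.U M
/-- raise the last `D•` -/
abbrev rD (M : List RLetter) : List RLetter := repl RLetter.Dr RLetter.L M

lemma rL_iter_append {A : List RLetter} (h : RLetter.Lr ∉ A) (n : ℕ) (M : List RLetter) :
    rL^[n] (M ++ A) = rL^[n] M ++ A := by
  induction n generalizing M with
  | zero => rfl
  | succ n ih =>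
    rw [Function.iterate_succ_apply, Function.iterate_succ_apply, rL,
      repl_append _ _ h, ih]

lemma rD_iter_append {A : List RLetter} (h : RLetter.Dr ∉ A) (n : ℕ) (M : List RLetter) :
    rD^[n] (M ++ A) = rD^[n] M ++ A := by
  induction n generalizing M with
  | zero => rfl
  | succ n ih =>
    rw [Function.iterate_succ_apply, Function.iterate_succ_apply, rD,
      repl_append _ _ h, ih]

lemma rL_iter_rD (n : ℕ) (M : List RLetter) : rL^[n] (rD M) = rD (rL^[n] M) := by
  induction n generalizing M with
  | zero => rfl
  | succ n ih =>
    rw [Function.iterate_succ_apply, Function.iterate_succ_apply, rL, rD,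
      repl_comm (by decide) (by decide) (by decide), ← rD, ← rL, ih]

lemma count_rL_Dr (M : List RLetter) : (rL M).count RLetter.Dr = M.count RLetter.Dr :=
  repl_count_other (by decide) (by decide) M

lemma count_rD_Lr (M : List RLetter) : (rD M).count RLetter.Lr = M.count RLetter.Lr :=
  repl_count_other (by decide) (by decide) M

lemma count_rL_Lr {M : List RLetter} (h : RLetter.Lr ∈ M) :
    (rL M).count RLetter.Lr + 1 = M.count RLetter.Lr :=
  repl_count_self (by decide) h

lemma count_rD_Dr {M : List RLetter} (h : RLetter.Dr ∈ M) :
    (rD M).count RLetter.Dr + 1 = M.count RLetter.Dr :=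
  repl_count_self (by decide) h

lemma psi1run_cons (a : ℤ × ℤ) (rest : List (ℤ × ℤ)) :
    Psi1Run (a :: rest) =
      (((B1 a (Psi1Run rest).1).2.1, (B1 a (Psi1Run rest).1).2.2),
        (B1 a (Psi1Run rest).1).1 :: (Psi1Run rest).2) := rfl

/-- Main invariant lemma. -/
lemma raise_main : ∀ (w : List (ℤ × ℤ)) (M : List RLetter),
    (∀ a ∈ w, a = ((0 : ℤ), (1 : ℤ)) ∨ a = ((-1 : ℤ), (0 : ℤ)) ∨ a = ((1 : ℤ), (-1 : ℤ))) →
    (Psi1Run w).1.2 ≤ M.count RLetter.Lr →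
    (Psi1Run w).1.1 ≤ M.count RLetter.Dr →
    ∃ A, raiseRun M w = some (rD^[(Psi1Run w).1.1] (rL^[(Psi1Run w).1.2] M) ++ A) ∧
      A.map eraseMark = Psi1 w := by
  intro w
  induction w with
  | nil =>
    intro M _ _ _
    exact ⟨[], by simp [raiseRun, Psi1Run], by simp [Psi1, Psi1Run]⟩
  | cons a rest ih =>
    intro M hmem hv hh
    have hmem' := fun b hb => hmem b (List.mem_cons_of_mem a hb)
    rw [psi1run_cons] at hv hh ⊢
    have hpsi : Psi1 (a :: rest) = (B1 a (Psi1Run rest).1).1 :: Psi1 rest := rfl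
    rcases hmem a List.mem_cons_self with ha | ha | ha <;> subst ha
    · -- a = (0,1)
      have hstep : raiseStep M ((0 : ℤ), (1 : ℤ)) = some (M ++ [RLetter.Lr]) := by
        simp [raiseStep]
      have hrun : raiseRun M (((0 : ℤ), (1 : ℤ)) :: rest) =
          raiseRun (M ++ [RLetter.Lr]) rest := by
        rw [raiseRun, hstep]
      by_cases hv0 : (Psi1Run rest).1.2 = 0
      · simp only [B1, if_pos rfl, hv0, reduceIte] at hv hh ⊢
        obtain ⟨A, h1, h2⟩ := ih (M ++ [RLetter.Lr]) hmem' (by simp [hv0])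
          (by simpa using hh)
        rw [hv0] at h1
        refine ⟨RLetter.Lr :: A, ?_, ?_⟩
        · rw [hrun, h1, Function.iterate_zero_apply,
            rD_iter_append (by simp) _ M]
          simp
        · simp [hpsi, B1, hv0, h2, eraseMark]
      · obtain ⟨n, hn⟩ := Nat.exists_eq_succ_of_ne_zero hv0
        simp only [B1, if_pos rfl, hv0, reduceIte] at hv hh ⊢
        obtain ⟨A, h1, h2⟩ := ih (M ++ [RLetter.Lr]) hmem'
          (by simp [List.count_append]; omega)
          (by simpa using hh)
        rw [hn] at h1 hv ⊢
        rw [Function.iterate_succ_apply, show rL (M ++ [RLetter.Lr]) = M ++ [RLetter.U] from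
            repl_snoc _ _ M,
          rL_iter_append (by simp) _ M, rD_iter_append (by simp) _ _] at h1
        refine ⟨RLetter.U :: A, ?_, ?_⟩
        · rw [hrun, h1]
          simp
        · simp [hpsi, B1, hv0, h2, eraseMark]
    · -- a = (-1,0)
      simp only [B1, show ¬(((-1 : ℤ), (0 : ℤ)) = ((0 : ℤ), (1 : ℤ))) from by decide,
        show ¬(((-1 : ℤ), (0 : ℤ)) = ((1 : ℤ), (-1 : ℤ))) from by decide,
        if_false, reduceIte] at hv hh ⊢
      have hDr : RLetter.Dr ∈ M := by
        rw [← List.count_pos_iff]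
        omega
      have hstep : raiseStep M ((-1 : ℤ), (0 : ℤ)) =
          some (rD M ++ [RLetter.D]) := by
        simp [raiseStep, replaceLast_eq, hDr]
      have hrun : raiseRun M (((-1 : ℤ), (0 : ℤ)) :: rest) =
          raiseRun (rD M ++ [RLetter.D]) rest := by
        rw [raiseRun, hstep]
      obtain ⟨A, h1, h2⟩ := ih (rD M ++ [RLetter.D]) hmem'
        (by simp [List.count_append, count_rD_Lr]; omega)
        (by
          have := count_rD_Dr hDr
          simp [List.count_append]
          omega)
      rw [rL_iter_append (by simp) _ _, rL_iter_rD,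
        rD_iter_append (by simp) _ _, ← Function.iterate_succ_apply] at h1
      refine ⟨RLetter.D :: A, ?_, ?_⟩
      · rw [hrun, h1]
        simp
      · simp [hpsi, B1, show ¬(((-1 : ℤ), (0 : ℤ)) = ((0 : ℤ), (1 : ℤ))) from by decide,
          show ¬(((-1 : ℤ), (0 : ℤ)) = ((1 : ℤ), (-1 : ℤ))) from by decide, h2, eraseMark]
    · -- a = (1,-1)
      by_cases hh0 : (Psi1Run rest).1.1 = 0 <;>
        simp only [B1, show ¬(((1 : ℤ), (-1 : ℤ)) = ((0 : ℤ), (1 : ℤ))) from by decide,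
          if_pos rfl, hh0, reduceIte] at hv hh ⊢
      · have hLr : RLetter.Lr ∈ M := by
          rw [← List.count_pos_iff]
          omega
        have hstep : raiseStep M ((1 : ℤ), (-1 : ℤ)) =
            some (rL M ++ [RLetter.Dr]) := by
          simp [raiseStep, replaceLast_eq, hLr]
        have hrun : raiseRun M (((1 : ℤ), (-1 : ℤ)) :: rest) =
            raiseRun (rL M ++ [RLetter.Dr]) rest := by
          rw [raiseRun, hstep]
        have hcL := count_rL_Lr hLr
        obtain ⟨A, h1, h2⟩ := ih (rL M ++ [RLetter.Dr]) hmem'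
          (by simp [List.count_append]; omega)
          (by simp [List.count_append, count_rL_Dr]; omega)
        rw [hh0, Function.iterate_zero_apply,
          rL_iter_append (by simp) _ _, ← Function.iterate_succ_apply] at h1
        refine ⟨RLetter.Dr :: A, ?_, ?_⟩
        · rw [hrun, h1]
          simp
        · simp [hpsi, B1, show ¬(((1 : ℤ), (-1 : ℤ)) = ((0 : ℤ), (1 : ℤ))) from by decide,
            hh0, h2, eraseMark]
      · obtain ⟨k, hk⟩ := Nat.exists_eq_succ_of_ne_zero hh0
        have hLr : RLetter.Lr ∈ M := by
          rw [← List.count_pos_iff]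
          omega
        have hstep : raiseStep M ((1 : ℤ), (-1 : ℤ)) =
            some (rL M ++ [RLetter.Dr]) := by
          simp [raiseStep, replaceLast_eq, hLr]
        have hrun : raiseRun M (((1 : ℤ), (-1 : ℤ)) :: rest) =
            raiseRun (rL M ++ [RLetter.Dr]) rest := by
          rw [raiseRun, hstep]
        have hcL := count_rL_Lr hLr
        obtain ⟨A, h1, h2⟩ := ih (rL M ++ [RLetter.Dr]) hmem'
          (by simp [List.count_append]; omega)
          (by simp [List.count_append, count_rL_Dr]; omega)
        rw [hk] at h1 hh ⊢
        rw [rL_iter_append (by simp) _ _, ← Function.iterate_succ_apply,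
          Function.iterate_succ_apply,
          show rD (rL^[(Psi1Run rest).1.2 + 1] M ++ [RLetter.Dr]) =
            rL^[(Psi1Run rest).1.2 + 1] M ++ [RLetter.L] from repl_snoc _ _ _,
          rD_iter_append (by simp) _ _] at h1
        refine ⟨RLetter.L :: A, ?_, ?_⟩
        · rw [hrun, h1]
          simp
        · simp [hpsi, B1, show ¬(((1 : ℤ), (-1 : ℤ)) = ((0 : ℤ), (1 : ℤ))) from by decide,
            hh0, h2, eraseMark]

/-- The counter of a quarter-plane word vanishes. -/
lemma qp_counter : ∀ (w : List (ℤ × ℤ)) (c : ℤ × ℤ),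
    (∀ a ∈ w, a = ((0 : ℤ), (1 : ℤ)) ∨ a = ((-1 : ℤ), (0 : ℤ)) ∨ a = ((1 : ℤ), (-1 : ℤ))) →
    (∀ i, 0 ≤ (c + (w.take i).sum).1 ∧ 0 ≤ (c + (w.take i).sum).2) →
    ((Psi1Run w).1.1 : ℤ) ≤ c.1 ∧ ((Psi1Run w).1.2 : ℤ) ≤ c.2 := by
  intro w
  induction w with
  | nil =>
    intro c _ hpref
    have h0 := hpref 0
    simp only [List.take_zero, List.sum_nil, add_zero] at h0
    simpa [Psi1Run] using h0
  | cons a rest ih =>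
    intro c hmem hpref
    have h0 : 0 ≤ c.1 ∧ 0 ≤ c.2 := by
      have := hpref 0
      simpa using this
    obtain ⟨hr1, hr2⟩ := ih (c + a) (fun b hb => hmem b (List.mem_cons_of_mem a hb))
      (fun i => by
        have := hpref (i + 1)
        simpa [add_assoc] using this)
    rw [psi1run_cons]
    rcases hmem a List.mem_cons_self with ha | ha | ha <;> subst ha
    · simp only [Prod.fst_add, Prod.snd_add] at hr1 hr2
      norm_num at hr1 hr2
      by_cases hv0 : (Psi1Run rest).1.2 = 0 <;>
        simp only [B1, if_pos rfl, hv0, if_true, if_false, reduceIte] <;>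
        constructor <;> push_cast <;> omega
    · simp only [Prod.fst_add, Prod.snd_add] at hr1 hr2
      norm_num at hr1 hr2
      simp only [B1, show ((-1 : ℤ), (0 : ℤ)) ≠ ((0 : ℤ), (1 : ℤ)) from by decide,
        show ((-1 : ℤ), (0 : ℤ)) ≠ ((1 : ℤ), (-1 : ℤ)) from by decide, if_false, reduceIte]
      constructor <;> push_cast <;> omega
    · simp only [Prod.fst_add, Prod.snd_add] at hr1 hr2
      norm_num at hr1 hr2
      by_cases hh0 : (Psi1Run rest).1.1 = 0 <;>
        simp only [B1, show ((1 : ℤ), (-1 : ℤ)) ≠ ((0 : ℤ), (1 : ℤ)) from by decide,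
          if_pos rfl, hh0, if_true, if_false, reduceIte] <;>
        constructor <;> push_cast <;> omega


theorem raising_algorithm_computes_psi1 (w : List (ℤ × ℤ)) (hw : QP1 w) :
    ∃ M, raiseRun [] w = some M ∧ M.map eraseMark = Psi1 w := by
  obtain ⟨hmem, hpref⟩ := hw
  have hc := qp_counter w (0, 0) hmem (by simpa using hpref)
  have hc1 := hc.1
  have hc2 := hc.2
  norm_num at hc1 hc2
  have h1 : (Psi1Run w).1.1 = 0 := by omega
  have h2 : (Psi1Run w).1.2 = 0 := by omega
  obtain ⟨A, hA, hA2⟩ := raise_main w [] hmem (by simp [h2]) (by simp [h1])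
  exact ⟨A, by simpa [h1, h2] using hA, hA2⟩
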